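/- Let F(C) := 4φ(C)² − λ*(4Φ(−C) − 1). Then F(C) ≤ F(C*) for every C ≥ 0; that is, C* is the global maximizer of F on [0,∞). -/

import Mathlib

open MeasureTheory

/-- The standard Gaussian density `φ(x) = (1/√(2π)) e^{-x²/2}`. -/
noncomputable def gphi (x : ℝ) : ℝ := (Real.sqrt (2 * Real.pi))⁻¹ * Real.exp (-(x ^ 2) / 2)

/-- The standard Gaussian CDF `Φ(x) = ∫_{-∞}^x φ(t) dt`. -/
noncomputable def gPhi (x : ℝ) : ℝ := ∫ t in Set.Iic x, gphi t

/-- The standard Gaussian measure on `ℝ^{n+1}`. -/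
noncomputable def gauss (n : ℕ) : Measure (Fin (n + 1) → ℝ) :=
  Measure.pi fun _ => ProbabilityTheory.gaussianReal 0 1

/-- The multivariate probabilists' Hermite polynomial `He_α(x) = ∏ᵢ He_{αᵢ}(xᵢ)`. -/
noncomputable def hermiteProd {m : ℕ} (α : Fin m → ℕ) (x : Fin m → ℝ) : ℝ :=
  ∏ i, Polynomial.aeval (x i) (Polynomial.hermite (α i))

/-- The factorial of a multi-index, `α! = ∏ᵢ αᵢ!`. -/
def mfact {m : ℕ} (α : Fin m → ℕ) : ℕ := ∏ i, Nat.factorial (α i)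

/-- A Davie–Reeds strip pair in direction `x₁`, up to a `γ`-null set. -/
def StripPair (n : ℕ) (Cstar : ℝ) (f g : (Fin (n + 1) → ℝ) → ℝ) : Prop :=
  ∀ᵐ x ∂(gauss n),
    (Cstar ≤ x 0 → f x = 1 ∧ g x = 1) ∧
    (x 0 ≤ -Cstar → f x = -1 ∧ g x = -1) ∧
    (|x 0| < Cstar → g x = -f x)

/- ### Auxiliary lemmas -/

lemma sqrt2pi_pos : (0:ℝ) < Real.sqrt (2 * Real.pi) :=
  Real.sqrt_pos.2 (by positivity)

lemma gphi_pos (x : ℝ) : 0 < gphi x := by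
  unfold gphi; positivity

lemma gphi_even (x : ℝ) : gphi (-x) = gphi x := by unfold gphi; ring_nf

lemma gphi_anti {s t : ℝ} (h0 : 0 ≤ s) (hst : s ≤ t) : gphi t ≤ gphi s := by
  unfold gphi
  have : Real.exp (-(t^2)/2) ≤ Real.exp (-(s^2)/2) := by
    apply Real.exp_le_exp.2; nlinarith
  have hK := (inv_pos.2 sqrt2pi_pos).le
  exact mul_le_mul_of_nonneg_left this hK

lemma gphi_le_K (x : ℝ) : gphi x ≤ (Real.sqrt (2 * Real.pi))⁻¹ := by
  unfold gphi
  nlinarith [Real.exp_le_one_iff.2 (show -(x^2)/2 ≤ 0 by nlinarith [sq_nonneg x]),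
    (inv_pos.2 sqrt2pi_pos), Real.exp_pos (-(x^2)/2)]

lemma gphi_cont : Continuous gphi := by
  unfold gphi; fun_prop

lemma gphi_integrable : Integrable gphi := by
  have h : Integrable (fun x : ℝ => (Real.sqrt (2 * Real.pi))⁻¹ * Real.exp (-(1/2) * x ^ 2)) :=
    (integrable_exp_neg_mul_sq (by norm_num : (0:ℝ) < 1/2)).const_mul _
  convert h using 2 with x
  unfold gphi; ring_nf

lemma integral_gphi : ∫ x, gphi x = 1 := by
  have h : ∫ x : ℝ, Real.exp (-(1/2) * x ^ 2) = Real.sqrt (Real.pi / (1/2)) :=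
    integral_gaussian (1/2)
  have h2 : ∫ x, gphi x = (Real.sqrt (2 * Real.pi))⁻¹ * ∫ x : ℝ, Real.exp (-(1/2) * x ^ 2) := by
    rw [← integral_const_mul]
    congr 1 with x
    unfold gphi; ring_nf
  rw [h2, h, show Real.pi / (1/2) = 2 * Real.pi by ring]
  exact inv_mul_cancel₀ sqrt2pi_pos.ne'

lemma gPhi_diff (a b : ℝ) : gPhi b - gPhi a = ∫ t in a..b, gphi t :=
  intervalIntegral.integral_Iic_sub_Iic gphi_integrable.integrableOn gphi_integrable.integrableOn

lemma gPhi_nonneg (x : ℝ) : 0 ≤ gPhi x :=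
  setIntegral_nonneg measurableSet_Iic (fun t _ => (gphi_pos t).le)

lemma gPhi_zero : gPhi 0 = 1/2 := by
  have h1 : (∫ x in Set.Iic (0:ℝ), gphi (-x)) = ∫ x in Set.Ioi (-(0:ℝ)), gphi x :=
    integral_comp_neg_Iic 0 gphi
  have h2 : (∫ x in Set.Iic (0:ℝ), gphi (-x)) = gPhi 0 := by
    unfold gPhi; congr 1 with x; rw [gphi_even]
  have h3 : gPhi 0 + ∫ x in Set.Ioi (0:ℝ), gphi x = 1 := by
    rw [show gPhi 0 = ∫ x in Set.Iic (0:ℝ), gphi x from rfl]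
    rw [intervalIntegral.integral_Iic_add_Ioi gphi_integrable.integrableOn
      gphi_integrable.integrableOn]
    exact integral_gphi
  rw [neg_zero] at h1
  linarith [h1 ▸ h2]

lemma gPhi_neg_diff (a b : ℝ) : gPhi (-a) - gPhi (-b) = ∫ t in a..b, gphi t := by
  rw [gPhi_diff (-b) (-a)]
  rw [show (∫ t in a..b, gphi t) = ∫ t in a..b, gphi (-t) by
    congr 1 with t; rw [gphi_even]]
  rw [intervalIntegral.integral_comp_neg fun t => gphi t]

lemma hasDeriv_negsq (t : ℝ) :
    HasDerivAt (fun t => -(gphi t)^2) (2*t*(gphi t)^2) t := by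
  have hu : HasDerivAt (fun t : ℝ => -(t^2)/2) (-t) t := by
    have := (hasDerivAt_pow 2 t).neg.div_const 2
    refine this.congr_deriv ?_
    push_cast; ring
  have hexp : HasDerivAt (fun t : ℝ => Real.exp (-(t^2)/2)) (Real.exp (-(t^2)/2) * (-t)) t :=
    (Real.hasDerivAt_exp _).comp t hu
  have hg : HasDerivAt gphi ((Real.sqrt (2 * Real.pi))⁻¹ * (Real.exp (-(t^2)/2) * (-t))) t :=
    hexp.const_mul _
  have := ((hg.mul hg).neg)
  refine (this.congr_deriv ?_).congr_of_eventuallyEq (Filter.Eventually.of_forall ?_)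
  · unfold gphi; ring
  · intro x; simp only [Pi.neg_apply, Pi.mul_apply]; ring

lemma sq_diff (a b : ℝ) : (gphi a)^2 - (gphi b)^2 = ∫ t in a..b, 2*t*(gphi t)^2 := by
  have h := intervalIntegral.integral_eq_sub_of_hasDerivAt
    (f := fun t => -(gphi t)^2) (fun t _ => hasDeriv_negsq t)
    (((continuous_const.mul continuous_id).mul (gphi_cont.pow 2)).intervalIntegrable a b)
  rw [h]; ring

lemma mul_gphi_mono {s t : ℝ} (h0 : 0 ≤ s) (hst : s ≤ t) (ht : t ≤ 1) :
    s * gphi s ≤ t * gphi t := by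
  unfold gphi
  have hK : (0:ℝ) < (Real.sqrt (2 * Real.pi))⁻¹ := inv_pos.2 sqrt2pi_pos
  have hE : Real.exp (-(t^2)/2) = Real.exp (-(s^2)/2) * Real.exp ((s^2 - t^2)/2) := by
    rw [← Real.exp_add]; ring_nf
  have h1 : 1 + (s^2 - t^2)/2 ≤ Real.exp ((s^2 - t^2)/2) := by
    have := Real.add_one_le_exp ((s^2 - t^2)/2); linarith
  have hA := Real.exp_pos (-(s^2)/2)
  rw [hE]
  have h2 : s ≤ t * (1 + (s^2 - t^2)/2) := by
    nlinarith [mul_nonneg (sub_nonneg.2 hst) (show (0:ℝ) ≤ 2 - t*(t+s) by nlinarith)]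
  have key : s ≤ t * Real.exp ((s^2 - t^2)/2) :=
    h2.trans (mul_le_mul_of_nonneg_left h1 (h0.trans hst))
  have h3 := mul_le_mul_of_nonneg_right key (mul_pos hK hA).le
  nlinarith [h3]

lemma mul_gphi_anti {s t : ℝ} (h1 : 1 ≤ s) (hst : s ≤ t) (ht : t ≤ 2) :
    t * gphi t ≤ s * gphi s := by
  unfold gphi
  have hK : (0:ℝ) < (Real.sqrt (2 * Real.pi))⁻¹ := inv_pos.2 sqrt2pi_pos
  have hE : Real.exp (-(t^2)/2) = Real.exp (-(s^2)/2) * Real.exp ((s^2 - t^2)/2) := by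
    rw [← Real.exp_add]; ring_nf
  have hA := Real.exp_pos (-(s^2)/2)
  have hEx := Real.exp_pos ((s^2 - t^2)/2)
  have hexp : Real.exp ((s^2 - t^2)/2) * (1 + (t^2 - s^2)/2) ≤ 1 := by
    have h2 : 1 + (t^2 - s^2)/2 ≤ Real.exp ((t^2 - s^2)/2) := by
      have := Real.add_one_le_exp ((t^2 - s^2)/2); linarith
    calc Real.exp ((s^2 - t^2)/2) * (1 + (t^2 - s^2)/2)
        ≤ Real.exp ((s^2 - t^2)/2) * Real.exp ((t^2 - s^2)/2) := by nlinarith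
      _ = 1 := by rw [← Real.exp_add]; ring_nf; exact Real.exp_zero
  rw [hE]
  have h2 : t ≤ s * (1 + (t^2 - s^2)/2) := by
    nlinarith [mul_nonneg (sub_nonneg.2 hst) (show (0:ℝ) ≤ s*(t+s) - 2 by nlinarith)]
  have key : t * Real.exp ((s^2 - t^2)/2) ≤ s := by
    have h3 := mul_le_mul_of_nonneg_right h2 hEx.le
    nlinarith [mul_le_mul_of_nonneg_left hexp (show (0:ℝ) ≤ s by linarith)]
  have h4 := mul_le_mul_of_nonneg_right key (mul_pos hK hA).le
  nlinarith [h4]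

lemma expLB {x : ℝ} (h0 : 0 ≤ x) (h32 : x ≤ 32) : (1 - x/32)^32 ≤ Real.exp (-x) := by
  have h1 : (1 : ℝ) - x/32 ≤ Real.exp (-(x/32)) := by
    have := Real.add_one_le_exp (-(x/32)); linarith
  have h2 : (0:ℝ) ≤ 1 - x/32 := by linarith
  calc (1 - x/32)^32 ≤ Real.exp (-(x/32))^32 := pow_le_pow_left₀ h2 h1 32
    _ = Real.exp (-x) := by
        rw [← Real.exp_nat_mul]; congr 1; push_cast; ring

lemma expUB {x : ℝ} (h0 : 0 ≤ x) : Real.exp (-x) ≤ ((1 + x/16)^16)⁻¹ := by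
  have h1 : (1 : ℝ) + x/16 ≤ Real.exp (x/16) := by
    have := Real.add_one_le_exp (x/16); linarith
  have h2 : (0:ℝ) < 1 + x/16 := by linarith
  rw [le_inv_comm₀ (Real.exp_pos _) (by positivity)]
  calc (1+x/16)^16 ≤ Real.exp (x/16)^16 := pow_le_pow_left₀ h2.le h1 16
    _ = (Real.exp (-x))⁻¹ := by
        rw [← Real.exp_nat_mul, ← Real.exp_neg]; congr 1; push_cast; ring

lemma sqrt2pi_lb : (2.5066 : ℝ) ≤ Real.sqrt (2 * Real.pi) := by
  rw [show (2.5066:ℝ) = Real.sqrt (2.5066^2) by rw [Real.sqrt_sq]; norm_num]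
  apply Real.sqrt_le_sqrt
  nlinarith [Real.pi_gt_d6]

lemma sqrt2pi_ub : Real.sqrt (2 * Real.pi) ≤ 2.5067 := by
  rw [show (2.5067:ℝ) = Real.sqrt (2.5067^2) by rw [Real.sqrt_sq]; norm_num]
  apply Real.sqrt_le_sqrt
  nlinarith [Real.pi_lt_d6]

lemma K_lb : (0.3989 : ℝ) ≤ (Real.sqrt (2 * Real.pi))⁻¹ := by
  rw [le_inv_comm₀ (by norm_num) (lt_of_lt_of_le (by norm_num) sqrt2pi_lb)]
  calc Real.sqrt (2*Real.pi) ≤ 2.5067 := sqrt2pi_ub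
    _ ≤ (0.3989:ℝ)⁻¹ := by norm_num

lemma K_ub : (Real.sqrt (2 * Real.pi))⁻¹ ≤ 0.39895 := by
  rw [inv_le_comm₀ (lt_of_lt_of_le (by norm_num) sqrt2pi_lb) (by norm_num)]
  calc (0.39895:ℝ)⁻¹ ≤ 2.5066 := by norm_num
    _ ≤ _ := sqrt2pi_lb

lemma gphi_lb {x : ℝ} (hx : x^2 ≤ 64) : 0.3989 * (1 - x^2/64)^32 ≤ gphi x := by
  unfold gphi
  have h1 : (1 - (x^2/2)/32)^32 ≤ Real.exp (-(x^2/2)) := expLB (by positivity) (by linarith)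
  rw [show -(x^2)/2 = -(x^2/2) by ring]
  rw [show (1 : ℝ) - x^2/64 = 1 - (x^2/2)/32 by ring]
  exact mul_le_mul K_lb h1 (pow_nonneg (by nlinarith) 32) (inv_pos.2 sqrt2pi_pos).le

lemma gphi_ub (x : ℝ) : gphi x ≤ 0.39895 * ((1 + x^2/32)^16)⁻¹ := by
  unfold gphi
  have h1 : Real.exp (-(x^2/2)) ≤ ((1 + (x^2/2)/16)^16)⁻¹ := expUB (by positivity)
  rw [show -(x^2)/2 = -(x^2/2) by ring]
  rw [show (1 : ℝ) + x^2/32 = 1 + (x^2/2)/16 by ring]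
  exact mul_le_mul K_ub h1 (Real.exp_pos _).le (by norm_num)

lemma gphi_ub04 : gphi 0.4 ≤ 0.36836 := by
  refine le_trans (gphi_ub 0.4) ?_
  rw [mul_inv_le_iff₀ (by positivity)]; norm_num

lemma gphi_ub17 : gphi 1.7 ≤ 0.10003 := by
  refine le_trans (gphi_ub 1.7) ?_
  rw [mul_inv_le_iff₀ (by positivity)]; norm_num

lemma gphi_lb17 : (0.0909:ℝ) ≤ gphi 1.7 := by
  calc (0.0909:ℝ) ≤ 0.3989 * (1 - (1.7:ℝ)^2/64)^32 := by norm_num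
    _ ≤ gphi 1.7 := gphi_lb (by norm_num)

lemma numfin {p q : ℝ} (h1 : 0.3681 ≤ p) (h2 : p ≤ 0.39895) (h3 : 0 ≤ q)
    (h4 : q ≤ 0.10003) : 0.8*p*(p^2+1/4) + q^2 ≤ p^2 := by
  nlinarith [mul_nonneg (sub_nonneg.2 h1) (sub_nonneg.2 h1),
    mul_nonneg (sub_nonneg.2 h1) (sub_nonneg.2 h2),
    mul_nonneg (sub_nonneg.2 h3) (sub_nonneg.2 h4), sq_nonneg (p - 0.3681)]

set_option maxHeartbeats 1000000 in
/-- `C*` is the global maximizer of `F(C) = 4φ(C)² − λ*(4Φ(−C) − 1)` on `[0,∞)`. -/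
theorem F_global_max (Cstar : ℝ) (hCstar : Cstar ∈ Set.Ioo (0 : ℝ) 1)
    (hroot : 4 * gphi Cstar ^ 2 - 4 * gPhi (-Cstar) + 1 = 0)
    (lam : ℝ) (hlam : lam = 2 * Cstar * gphi Cstar)
    (F : ℝ → ℝ) (hF : ∀ C, F C = 4 * gphi C ^ 2 - lam * (4 * gPhi (-C) - 1)) :
    ∀ C : ℝ, 0 ≤ C → F C ≤ F Cstar := by
  subst hlam
  obtain ⟨hc0, hc1⟩ := hCstar
  have hpos := gphi_pos Cstar
  have hPhi : gPhi (-Cstar) = (gphi Cstar)^2 + 1/4 := by nlinarith [hroot]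
  -- Step A : Cstar ≤ 0.4
  have hc4 : Cstar ≤ 0.4 := by
    by_contra hgt
    push_neg at hgt
    have h1 : gPhi (-Cstar) = 1/2 - ∫ t in (0:ℝ)..Cstar, gphi t := by
      have h := gPhi_neg_diff 0 Cstar
      rw [neg_zero, gPhi_zero] at h
      linarith
    have h2 : Cstar * gphi Cstar ≤ ∫ t in (0:ℝ)..Cstar, gphi t := by
      have hmono : ∀ t ∈ Set.Icc (0:ℝ) Cstar, gphi Cstar ≤ gphi t := fun t ht =>
        gphi_anti ht.1 ht.2
      calc Cstar * gphi Cstar = ∫ _t in (0:ℝ)..Cstar, gphi Cstar := by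
            rw [intervalIntegral.integral_const]; simp
        _ ≤ ∫ t in (0:ℝ)..Cstar, gphi t :=
            intervalIntegral.integral_mono_on hc0.le intervalIntegrable_const
              (gphi_cont.intervalIntegrable 0 Cstar) hmono
    have key : (gphi Cstar)^2 + Cstar * gphi Cstar ≤ 1/4 := by
      nlinarith [h1, h2, hPhi]
    rcases le_total Cstar 0.5 with h5 | h5
    · have hL : (0.3519:ℝ) ≤ gphi Cstar :=
        calc (0.3519:ℝ) ≤ 0.3989 * (1 - (0.5:ℝ)^2/64)^32 := by norm_num
          _ ≤ gphi 0.5 := gphi_lb (by norm_num)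
          _ ≤ gphi Cstar := gphi_anti hc0.le h5
      nlinarith [key, hL, hgt, hpos]
    rcases le_total Cstar 0.6 with h6 | h6
    · have hL : (0.333:ℝ) ≤ gphi Cstar :=
        calc (0.333:ℝ) ≤ 0.3989 * (1 - (0.6:ℝ)^2/64)^32 := by norm_num
          _ ≤ gphi 0.6 := gphi_lb (by norm_num)
          _ ≤ gphi Cstar := gphi_anti hc0.le h6
      nlinarith [key, hL, h5, hpos]
    rcases le_total Cstar 0.75 with h7 | h7
    · have hL : (0.3007:ℝ) ≤ gphi Cstar :=
        calc (0.3007:ℝ) ≤ 0.3989 * (1 - (0.75:ℝ)^2/64)^32 := by norm_num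
          _ ≤ gphi 0.75 := gphi_lb (by norm_num)
          _ ≤ gphi Cstar := gphi_anti hc0.le h7
      nlinarith [key, hL, h6, hpos]
    rcases le_total Cstar 0.9 with h9 | h9
    · have hL : (0.2653:ℝ) ≤ gphi Cstar :=
        calc (0.2653:ℝ) ≤ 0.3989 * (1 - (0.9:ℝ)^2/64)^32 := by norm_num
          _ ≤ gphi 0.9 := gphi_lb (by norm_num)
          _ ≤ gphi Cstar := gphi_anti hc0.le h9
      nlinarith [key, hL, h7, hpos]
    · have hL : (0.2409:ℝ) ≤ gphi Cstar :=
        calc (0.2409:ℝ) ≤ 0.3989 * (1 - (1:ℝ)^2/64)^32 := by norm_num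
          _ ≤ gphi 1 := gphi_lb (by norm_num)
          _ ≤ gphi Cstar := gphi_anti hc0.le hc1.le
      nlinarith [key, hL, h9, hpos]
  -- bounds on p := gphi Cstar
  have hplb : (0.3681:ℝ) ≤ gphi Cstar :=
    calc (0.3681:ℝ) ≤ 0.3989 * (1 - (0.4:ℝ)^2/64)^32 := by norm_num
      _ ≤ gphi 0.4 := gphi_lb (by norm_num)
      _ ≤ gphi Cstar := gphi_anti hc0.le hc4
  have hpub : gphi Cstar ≤ 0.39895 := le_trans (gphi_le_K Cstar) K_ub
  intro C hC
  rcases le_total C Cstar with hCc | hcC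
  · -- Case 1 : 0 ≤ C ≤ Cstar
    have e1 : gPhi (-C) - gPhi (-Cstar) = ∫ t in C..Cstar, gphi t := gPhi_neg_diff C Cstar
    have e2 : (gphi C)^2 - (gphi Cstar)^2 = ∫ t in C..Cstar, 2*t*(gphi t)^2 := sq_diff C Cstar
    have hnn : 0 ≤ ∫ t in C..Cstar,
        (2 * Cstar * gphi Cstar * gphi t - 2*t*(gphi t)^2) := by
      apply intervalIntegral.integral_nonneg hCc
      intro t ht
      have h1 : t * gphi t ≤ Cstar * gphi Cstar := mul_gphi_mono (hC.trans ht.1) ht.2 hc1.le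
      nlinarith [gphi_pos t]
    have heq : (∫ t in C..Cstar, (2 * Cstar * gphi Cstar * gphi t - 2*t*(gphi t)^2))
        = 2 * Cstar * gphi Cstar * (gPhi (-C) - gPhi (-Cstar))
          - ((gphi C)^2 - (gphi Cstar)^2) := by
      rw [e1, e2, ← intervalIntegral.integral_const_mul]
      exact intervalIntegral.integral_sub
        ((gphi_cont.intervalIntegrable C Cstar).const_mul _)
        (((continuous_const.mul continuous_id).mul (gphi_cont.pow 2)).intervalIntegrable C Cstar)
    rw [hF C, hF Cstar]
    nlinarith [hnn, heq]
  rcases le_total C 1.7 with h17 | h17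
  · -- Case 2 : Cstar ≤ C ≤ 1.7
    have e1 : gPhi (-Cstar) - gPhi (-C) = ∫ t in Cstar..C, gphi t := gPhi_neg_diff Cstar C
    have e2 : (gphi Cstar)^2 - (gphi C)^2 = ∫ t in Cstar..C, 2*t*(gphi t)^2 := sq_diff Cstar C
    have hnn : 0 ≤ ∫ t in Cstar..C,
        (2*t*(gphi t)^2 - 2 * Cstar * gphi Cstar * gphi t) := by
      apply intervalIntegral.integral_nonneg hcC
      intro t ht
      have h1 : Cstar * gphi Cstar ≤ t * gphi t := by
        rcases le_total t 1 with htt | htt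
        · exact mul_gphi_mono hc0.le ht.1 htt
        · calc Cstar * gphi Cstar ≤ 0.4 * gphi 0.4 :=
                mul_gphi_mono hc0.le hc4 (by norm_num)
            _ ≤ 1.7 * gphi 1.7 := by nlinarith [gphi_ub04, gphi_lb17]
            _ ≤ t * gphi t := mul_gphi_anti htt (ht.2.trans h17) (by norm_num)
      nlinarith [gphi_pos t]
    have heq : (∫ t in Cstar..C, (2*t*(gphi t)^2 - 2 * Cstar * gphi Cstar * gphi t))
        = ((gphi Cstar)^2 - (gphi C)^2)
          - 2 * Cstar * gphi Cstar * (gPhi (-Cstar) - gPhi (-C)) := by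
      rw [e1, e2, ← intervalIntegral.integral_const_mul]
      exact intervalIntegral.integral_sub
        (((continuous_const.mul continuous_id).mul (gphi_cont.pow 2)).intervalIntegrable Cstar C)
        ((gphi_cont.intervalIntegrable Cstar C).const_mul _)
    rw [hF C, hF Cstar]
    nlinarith [hnn, heq]
  · -- Case 3 : C ≥ 1.7
    have hA : gPhi (-Cstar) - gPhi (-C) ≤ (gphi Cstar)^2 + 1/4 := by
      have := gPhi_nonneg (-C); linarith
    have hB : gphi C ≤ 0.10003 :=
      le_trans (gphi_anti (by norm_num : (0:ℝ) ≤ 1.7) h17) gphi_ub17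
    have hlam_pos : (0:ℝ) < 2 * Cstar * gphi Cstar := by positivity
    have hlam_ub : 2 * Cstar * gphi Cstar ≤ 0.8 * gphi Cstar := by
      have h := mul_le_mul_of_nonneg_right (show 2*Cstar ≤ 0.8 by linarith) hpos.le
      linarith [h]
    have t1 : 2 * Cstar * gphi Cstar * (gPhi (-Cstar) - gPhi (-C))
        ≤ 2 * Cstar * gphi Cstar * ((gphi Cstar)^2 + 1/4) :=
      mul_le_mul_of_nonneg_left hA hlam_pos.le
    have t2 : 2 * Cstar * gphi Cstar * ((gphi Cstar)^2 + 1/4)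
        ≤ 0.8 * gphi Cstar * ((gphi Cstar)^2 + 1/4) :=
      mul_le_mul_of_nonneg_right hlam_ub (by positivity)
    have t3 : 0.8 * gphi Cstar * ((gphi Cstar)^2 + 1/4) + (gphi C)^2 ≤ (gphi Cstar)^2 :=
      numfin hplb hpub (gphi_pos C).le hB
    rw [hF C, hF Cstar]
    nlinarith [t1, t2, t3]
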